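/- arXiv:2204.04626 — 2 statements merged into one kernel-verified Lean document; each statement's English description precedes it below -/
import Mathlib

section
/- Let f ∈ ℂ[x,y] and let α, β be natural numbers. Define polynomials A_x = α·f + x·f_x, A_y = β·f + y·f_y, A_{xx} = α(α−1)·f + 2α·x·f_x + x²·f_{xx}, A_{yy} = β(β−1)·f + 2β·y·f_y + y²·f_{yy}, A_{xy} = αβ·f + α·y·f_y + β·x·f_x + x·y·f_{xy}. Then the following identity of polynomials holds: x²·y²·Hess(x^α·y^β·f) = x^{3α}·y^{3β}·(2·A_x·A_y·A_{xy} − A_x²·A_{yy} − A_y²·A_{xx}). -/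
open scoped Pointwise
open MvPolynomial

noncomputable section

/-- The torus `(ℂ ∖ {0})²`. -/
def Torus : Set (ℂ × ℂ) := {p | p.1 ≠ 0 ∧ p.2 ≠ 0}

/-- Evaluation of a bivariate polynomial at a point of `ℂ²`. -/
def evalP (f : MvPolynomial (Fin 2) ℂ) (p : ℂ × ℂ) : ℂ :=
  MvPolynomial.eval (fun i => if i = 0 then p.1 else p.2) f

/-- The affine line through `p` with direction `w`, as a subset of `ℂ²`. -/
def lineThrough (p w : ℂ × ℂ) : Set (ℂ × ℂ) :=
  {q | ∃ t : ℂ, q = (p.1 + t * w.1, p.2 + t * w.2)}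

/-- The univariate polynomial `t ↦ f (p + t • w)`. -/
def lineRestrict (f : MvPolynomial (Fin 2) ℂ) (p w : ℂ × ℂ) : Polynomial ℂ :=
  MvPolynomial.aeval
    (fun i => if i = 0 then Polynomial.C p.1 + Polynomial.C w.1 * Polynomial.X
              else Polynomial.C p.2 + Polynomial.C w.2 * Polynomial.X) f

/-- Intersection multiplicity at `p` of the curve `{f = 0}` and the line through `p`
with direction `w` (as `ℕ∞`; it is `⊤` if the line lies inside the curve). -/
def interMult (f : MvPolynomial (Fin 2) ℂ) (p w : ℂ × ℂ) : ℕ∞ :=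
  if lineRestrict f p w = 0 then ⊤
  else (Polynomial.rootMultiplicity 0 (lineRestrict f p w) : ℕ∞)

/-- The point of `ℝ²` corresponding to a lattice point. -/
def rpt (k : ℤ × ℤ) : ℝ × ℝ := ((k.1 : ℝ), (k.2 : ℝ))

/-- The support of `f` is contained in `S ⊆ ℤ²`. -/
def SuppIn (f : MvPolynomial (Fin 2) ℂ) (S : Set (ℤ × ℤ)) : Prop :=
  ∀ m ∈ f.support, ((m 0 : ℤ), (m 1 : ℤ)) ∈ S

/-- The coefficient of `f` at the exponent `k ∈ ℤ²`. -/
def coeffAt (f : MvPolynomial (Fin 2) ℂ) (k : ℤ × ℤ) : ℂ :=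
  if 0 ≤ k.1 ∧ 0 ≤ k.2 then
    f.coeff (Finsupp.single (0 : Fin 2) k.1.toNat + Finsupp.single (1 : Fin 2) k.2.toNat)
  else 0

/-- A property `Q` holds for a generic polynomial supported in `S`: there is a nonzero
polynomial `D` in variables indexed by `S` such that `Q f` holds for every `f` with
support in `S` whose coefficient tuple is not annihilated by `D`. -/
def GenericOn (S : Set (ℤ × ℤ)) (Q : MvPolynomial (Fin 2) ℂ → Prop) : Prop :=
  ∃ D : MvPolynomial S ℂ, D ≠ 0 ∧
    ∀ f : MvPolynomial (Fin 2) ℂ, SuppIn f S →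
      MvPolynomial.eval (fun k => coeffAt f k.1) D ≠ 0 → Q f

/-- `P` is a lattice polygon: the convex hull of finitely many lattice points. -/
def IsLatticePolygon (P : Set (ℝ × ℝ)) : Prop :=
  ∃ V : Finset (ℤ × ℤ), V.Nonempty ∧ P = convexHull ℝ (rpt '' (V : Set (ℤ × ℤ)))

/-- The standard triangle `Δ = conv {(0,0), (1,0), (0,1)}`. -/
def stdTriangle : Set (ℝ × ℝ) := convexHull ℝ {(0, 0), (1, 0), (0, 1)}

/-- The lattice points of a subset of `ℝ²`. -/
def latticePts (P : Set (ℝ × ℝ)) : Set (ℤ × ℤ) := {k | rpt k ∈ P}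

/-- The support set (face) of `P` in the direction of the covector `γ`. -/
def face (P : Set (ℝ × ℝ)) (γ : ℤ × ℤ) : Set (ℝ × ℝ) :=
  {p ∈ P | ∀ q ∈ P, (γ.1 : ℝ) * q.1 + (γ.2 : ℝ) * q.2 ≤ (γ.1 : ℝ) * p.1 + (γ.2 : ℝ) * p.2}

/-- The lattice length of the face of `P` in direction `γ`. -/
def lenFace (P : Set (ℝ × ℝ)) (γ : ℤ × ℤ) : ℕ := (latticePts (face P γ)).ncard - 1

/-- The Euclidean area of a subset of `ℝ²`. -/
def areaOf (P : Set (ℝ × ℝ)) : ℝ := (MeasureTheory.volume P).toReal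

/-- The set of inflection points of `{f = 0}` in the torus. -/
def inflPts (f : MvPolynomial (Fin 2) ℂ) : Set (ℂ × ℂ) :=
  {p | p ∈ Torus ∧ evalP f p = 0 ∧ ∃ w : ℂ × ℂ, w ≠ 0 ∧ 3 ≤ interMult f p w}

/-- The set of lines (as subsets of `ℂ²`) tangent to `{f = 0}` at two distinct
points of the torus. -/
def bitangentLines (f : MvPolynomial (Fin 2) ℂ) : Set (Set (ℂ × ℂ)) :=
  {l | ∃ p w q₁ q₂ : ℂ × ℂ, w ≠ 0 ∧ l = lineThrough p w ∧
    q₁ ∈ lineThrough p w ∩ Torus ∧ q₂ ∈ lineThrough p w ∩ Torus ∧ q₁ ≠ q₂ ∧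
    2 ≤ interMult f q₁ w ∧ 2 ≤ interMult f q₂ w}

/-- `P` contains a lattice translate of `5Δ`. -/
def Contains5Delta (P : Set (ℝ × ℝ)) : Prop :=
  ∃ t : ℤ × ℤ, rpt t +ᵥ ((5 : ℝ) • stdTriangle) ⊆ P

/-- The (bordered) Hessian polynomial of `f`:
`Hess f = 2 f_x f_y f_{xy} - f_x² f_{yy} - f_y² f_{xx}`. -/
def hess (f : MvPolynomial (Fin 2) ℂ) : MvPolynomial (Fin 2) ℂ :=
  2 * pderiv 0 f * pderiv 1 f * pderiv 0 (pderiv 1 f)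
    - (pderiv 0 f) ^ 2 * pderiv 1 (pderiv 1 f)
    - (pderiv 1 f) ^ 2 * pderiv 0 (pderiv 0 f)

/-! Multiplying by `x^α y^β` and rescaling each derivative `∂_i` by `X i` only twists the
derivatives by the Euler factors of the monomial, so `x²y² Hess(x^α y^β f)` is the bordered
Hessian expression in the rescaled derivatives, each of which is `x^α y^β` times the
corresponding `A`; the three factors of each term give `x^{3α} y^{3β}`. -/

section Twist

variable {R σ : Type*} [CommRing R] {i j : σ}

theorem pderiv_X_pow_of_ne (h : j ≠ i) (n : ℕ) : pderiv i (X j ^ n : MvPolynomial σ R) = 0 := by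
  rw [pderiv_pow, pderiv_X_of_ne h, mul_zero]

theorem X_mul_pderiv_X_pow (i : σ) (n : ℕ) :
    X i * pderiv i (X i ^ n : MvPolynomial σ R) = C (n : R) * X i ^ n := by
  induction n with
  | zero => simp
  | succ n ih =>
    rw [pow_succ, pderiv_mul, pderiv_X_self, Nat.cast_succ, map_add, map_one]
    linear_combination X i * ih

theorem X_sq_mul_pderiv_pderiv_X_pow (i : σ) (n : ℕ) :
    X i ^ 2 * pderiv i (pderiv i (X i ^ n : MvPolynomial σ R))
      = C ((n : R) * ((n : R) - 1)) * X i ^ n := by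
  have h := congrArg (pderiv i) (X_mul_pderiv_X_pow (R := R) i n)
  rw [pderiv_mul, pderiv_X_self, pderiv_mul, pderiv_C] at h
  rw [map_mul, map_sub, map_one]
  linear_combination X i * h + (C (n : R) - 1) * X_mul_pderiv_X_pow (R := R) i n

variable (a b : ℕ) (f : MvPolynomial σ R)

theorem X_mul_pderiv_X_pow_mul_X_pow_mul (hij : i ≠ j) :
    X i * pderiv i (X i ^ a * X j ^ b * f)
      = X i ^ a * X j ^ b * (C (a : R) * f + X i * pderiv i f) := by
  rw [pderiv_mul, pderiv_mul, pderiv_X_pow_of_ne hij.symm]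
  linear_combination (X j ^ b * f) * X_mul_pderiv_X_pow (R := R) i a

theorem X_sq_mul_pderiv_pderiv_X_pow_mul_X_pow_mul (hij : i ≠ j) :
    X i ^ 2 * pderiv i (pderiv i (X i ^ a * X j ^ b * f))
      = X i ^ a * X j ^ b * (C ((a : R) * ((a : R) - 1)) * f + C (2 * (a : R)) * X i * pderiv i f
          + X i ^ 2 * pderiv i (pderiv i f)) := by
  have hX := X_sq_mul_pderiv_pderiv_X_pow (R := R) i a
  simp only [map_mul] at hX
  simp only [map_add, pderiv_mul, pderiv_X_pow_of_ne hij.symm, map_mul, map_ofNat,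
    mul_zero, add_zero]
  linear_combination (X j ^ b * f) * hX
    + (2 * X j ^ b * pderiv i f * X i) * X_mul_pderiv_X_pow (R := R) i a

theorem X_mul_X_mul_pderiv_pderiv_X_pow_mul_X_pow_mul (hij : i ≠ j) :
    X i * X j * pderiv i (pderiv j (X i ^ a * X j ^ b * f))
      = X i ^ a * X j ^ b * (C ((a : R) * (b : R)) * f + C (a : R) * X j * pderiv j f
          + C (b : R) * X i * pderiv i f + X i * X j * pderiv i (pderiv j f)) := by
  have hmixed : pderiv i (pderiv j (X j ^ b : MvPolynomial σ R)) = 0 := by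
    rw [pderiv_pow, pderiv_X_self, mul_one, pderiv_mul, pderiv_X_pow_of_ne hij.symm]
    simp
  simp only [map_add, pderiv_mul, pderiv_X_pow_of_ne hij, pderiv_X_pow_of_ne hij.symm, hmixed,
    map_mul, mul_zero, zero_mul, add_zero, zero_add]
  linear_combination
    (X j * pderiv j (X j ^ b) * f + X j ^ b * X j * pderiv j f) * X_mul_pderiv_X_pow (R := R) i a
      + (C (a : R) * X i ^ a * f + X i ^ a * X i * pderiv i f) * X_mul_pderiv_X_pow (R := R) j b

end Twist

theorem X_sq_mul_X_sq_mul_hess (g : MvPolynomial (Fin 2) ℂ) :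
    X 0 ^ 2 * X 1 ^ 2 * hess g
      = 2 * (X 0 * pderiv 0 g) * (X 1 * pderiv 1 g) * (X 0 * X 1 * pderiv 0 (pderiv 1 g))
        - (X 0 * pderiv 0 g) ^ 2 * (X 1 ^ 2 * pderiv 1 (pderiv 1 g))
        - (X 1 * pderiv 1 g) ^ 2 * (X 0 ^ 2 * pderiv 0 (pderiv 0 g)) := by
  rw [hess]
  ring

theorem hessian_twist (f : MvPolynomial (Fin 2) ℂ) (α β : ℕ)
    (Ax Ay Axx Ayy Axy : MvPolynomial (Fin 2) ℂ)
    (hAx : Ax = C (α : ℂ) * f + X 0 * pderiv 0 f)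
    (hAy : Ay = C (β : ℂ) * f + X 1 * pderiv 1 f)
    (hAxx : Axx = C ((α : ℂ) * ((α : ℂ) - 1)) * f + C (2 * (α : ℂ)) * X 0 * pderiv 0 f
        + X 0 ^ 2 * pderiv 0 (pderiv 0 f))
    (hAyy : Ayy = C ((β : ℂ) * ((β : ℂ) - 1)) * f + C (2 * (β : ℂ)) * X 1 * pderiv 1 f
        + X 1 ^ 2 * pderiv 1 (pderiv 1 f))
    (hAxy : Axy = C ((α : ℂ) * (β : ℂ)) * f + C (α : ℂ) * X 1 * pderiv 1 f
        + C (β : ℂ) * X 0 * pderiv 0 f + X 0 * X 1 * pderiv 0 (pderiv 1 f)) :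
    X 0 ^ 2 * X 1 ^ 2 * hess (X 0 ^ α * X 1 ^ β * f)
      = X 0 ^ (3 * α) * X 1 ^ (3 * β)
          * (2 * Ax * Ay * Axy - Ax ^ 2 * Ayy - Ay ^ 2 * Axx) := by
  have h01 : (0 : Fin 2) ≠ 1 := by decide
  have hswap : X 0 ^ α * X 1 ^ β * f = X 1 ^ β * X 0 ^ α * f := by ring
  have hx := X_mul_pderiv_X_pow_mul_X_pow_mul α β f h01
  have hxx := X_sq_mul_pderiv_pderiv_X_pow_mul_X_pow_mul α β f h01
  have hxy := X_mul_X_mul_pderiv_pderiv_X_pow_mul_X_pow_mul α β f h01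
  have hy := X_mul_pderiv_X_pow_mul_X_pow_mul β α f h01.symm
  have hyy := X_sq_mul_pderiv_pderiv_X_pow_mul_X_pow_mul β α f h01.symm
  rw [← hswap] at hy hyy
  rw [X_sq_mul_X_sq_mul_hess, hx, hy, hxx, hyy, hxy, ← hAx, ← hAy, ← hAxx, ← hAyy, ← hAxy,
    pow_mul', pow_mul']
  ring

end
end

section
/- Let P ⊂ ℝ² be a two-dimensional lattice polygon with P ⊂ [0,∞)² whose minimal y-coordinate equals 0. Assume that the set {(x,y) ∈ P ∩ ℤ² : 0 ≤ y ≤ 2} is not of the form {(s,0),(s+1,0),(s,1)} for any integer s (equivalently, P is not a thin triangle). Then for a generic polynomial f ∈ ℂ^{P∩ℤ²}: for every x₀ ∈ ℂ∖{0} with f(x₀,0) = 0 and every affine complex line L through the point (x₀,0), the intersection multiplicity of {f=0} and L at (x₀,0) is at most 2. -/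
open scoped Pointwise
open MvPolynomial

noncomputable section

/-!
If the line through `(x₀, 0)` in direction `w` meets `{f = 0}` to order at least three, then
`w` is orthogonal to the gradient of `f` and isotropic for its Hessian, so the flex polynomial
`f_xx f_y² - 2 f_xy f_x f_y + f_yy f_x²` vanishes at `(x₀, 0)`. Restricted to `y = 0`, this
polynomial only involves the rows `y⁰, y¹, y²` of `f`, and `x₀ ≠ 0` is a root of
`f(x, 0) / x^s`, where `x^s` is the lowest power of `x` on the bottom edge. So the resultant of
these two univariate polynomials, a polynomial `D` in the coefficients of `f`, vanishes.
`D ≠ 0` because an explicit `f`, with bottom edge `x^n - 1` or `x^n + x + 1` plus one monomial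
in row one or two, makes the two polynomials coprime. Such an `f` exists unless row two is empty,
the bottom edge has length one and row one is the single point above its left end, i.e. unless
`P` is a thin triangle.
-/

open Polynomial

namespace MvPolynomial

variable {R σ : Type*} [CommRing R]

theorem pderiv_comm (i j : σ) (f : MvPolynomial σ R) :
    pderiv i (pderiv j f) = pderiv j (pderiv i f) := by
  have h : ⁅pderiv i, pderiv j⁆ = (0 : Derivation R (MvPolynomial σ R) (MvPolynomial σ R)) :=
    derivation_ext fun k => by
      classical
      rw [Derivation.commutator_apply]
      simp only [pderiv_X, Pi.single_apply]
      split_ifs <;> simp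
  have := congr($h f)
  rwa [Derivation.commutator_apply, Derivation.zero_apply, sub_eq_zero] at this

end MvPolynomial

section LineRestrict

variable (f : MvPolynomial (Fin 2) ℂ) (p w : ℂ × ℂ)

theorem eval_zero_lineRestrict : (lineRestrict f p w).eval 0 = evalP f p := by
  rw [lineRestrict, ← Polynomial.coe_aeval_eq_eval, ← AlgHom.comp_apply, comp_aeval, evalP,
    ← MvPolynomial.coe_aeval_eq_eval]
  change MvPolynomial.aeval _ f = MvPolynomial.aeval _ f
  congr 2 with i
  split_ifs <;> simp

theorem derivative_lineRestrict :
    derivative (lineRestrict f p w) =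
      Polynomial.C w.1 * lineRestrict (pderiv 0 f) p w
        + Polynomial.C w.2 * lineRestrict (pderiv 1 f) p w := by
  induction f using MvPolynomial.induction_on with
  | C a => simp [lineRestrict]
  | add f g hf hg => simp only [lineRestrict, map_add] at hf hg ⊢; rw [hf, hg]; ring
  | mul_X f j hf =>
    simp only [lineRestrict] at hf ⊢
    fin_cases j <;> simp [derivative_mul, hf] <;> ring

theorem coeff_one_lineRestrict :
    (lineRestrict f p w).coeff 1 = w.1 * evalP (pderiv 0 f) p + w.2 * evalP (pderiv 1 f) p := by
  have h := congr_arg (eval 0) (derivative_lineRestrict f p w)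
  rw [← coeff_zero_eq_eval_zero, coeff_derivative] at h
  simpa [eval_zero_lineRestrict] using h

theorem two_mul_coeff_two_lineRestrict :
    2 * (lineRestrict f p w).coeff 2 =
      w.1 ^ 2 * evalP (pderiv 0 (pderiv 0 f)) p
        + 2 * w.1 * w.2 * evalP (pderiv 0 (pderiv 1 f)) p
        + w.2 ^ 2 * evalP (pderiv 1 (pderiv 1 f)) p := by
  have h := congr_arg (fun q => eval 0 (derivative q)) (derivative_lineRestrict f p w)
  rw [← coeff_zero_eq_eval_zero, coeff_derivative, coeff_derivative] at h
  simp only [derivative_add, derivative_mul, Polynomial.derivative_C, zero_mul, zero_add,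
    derivative_lineRestrict, MvPolynomial.pderiv_comm (1 : Fin 2) 0, Polynomial.eval_add,
    Polynomial.eval_mul, eval_zero_lineRestrict] at h
  norm_num at h
  linear_combination h

theorem coeff_lineRestrict_eq_zero_of_lt_interMult {k : ℕ} (h : (k : ℕ∞) < interMult f p w) :
    (lineRestrict f p w).coeff k = 0 := by
  unfold interMult at h
  split_ifs at h with h0
  · simp [h0]
  · rw [rootMultiplicity_eq_natTrailingDegree'] at h
    exact coeff_eq_zero_of_lt_natTrailingDegree (by exact_mod_cast h)

end LineRestrict

/-- The Hessian form of `f` evaluated on the tangent direction `(f_y, -f_x)`. -/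
def flexPoly {R : Type*} [CommRing R] (f : MvPolynomial (Fin 2) R) : MvPolynomial (Fin 2) R :=
  pderiv 0 (pderiv 0 f) * pderiv 1 f ^ 2 - 2 * pderiv 0 (pderiv 1 f) * pderiv 0 f * pderiv 1 f
    + pderiv 1 (pderiv 1 f) * pderiv 0 f ^ 2

theorem quadratic_form_eq_zero_of_orthogonal {K : Type*} [Field K] {a b A B C w₁ w₂ : K}
    (hw : w₁ ≠ 0 ∨ w₂ ≠ 0) (h₁ : w₁ * a + w₂ * b = 0)
    (h₂ : w₁ ^ 2 * A + 2 * w₁ * w₂ * B + w₂ ^ 2 * C = 0) :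
    A * b ^ 2 - 2 * B * a * b + C * a ^ 2 = 0 := by
  obtain ⟨t, rfl, rfl⟩ : ∃ t, a = t * w₂ ∧ b = -(t * w₁) := by
    rcases hw with hw | hw
    · exact ⟨-b / w₁, by field_simp; linear_combination h₁, by field_simp⟩
    · exact ⟨a / w₂, by field_simp, by field_simp; linear_combination h₁⟩
  linear_combination t ^ 2 * h₂

theorem evalP_flexPoly_eq_zero_of_two_lt_interMult {f : MvPolynomial (Fin 2) ℂ} {p w : ℂ × ℂ}
    (hw : w ≠ 0) (h : 2 < interMult f p w) : evalP (flexPoly f) p = 0 := by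
  have h₁ := coeff_one_lineRestrict f p w
  have h₂ := two_mul_coeff_two_lineRestrict f p w
  rw [coeff_lineRestrict_eq_zero_of_lt_interMult f p w (lt_trans (by norm_num) h)] at h₁
  rw [coeff_lineRestrict_eq_zero_of_lt_interMult f p w h, mul_zero] at h₂
  have hw' : w.1 ≠ 0 ∨ w.2 ≠ 0 := by
    by_contra! h0
    exact hw (Prod.ext h0.1 h0.2)
  simp only [flexPoly, evalP, map_add, map_sub, map_mul, map_pow, map_ofNat] at h₁ h₂ ⊢
  exact quadratic_form_eq_zero_of_orthogonal hw' h₁.symm h₂.symm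

section RestrictXAxis

variable {R : Type*} [CommRing R]

def restrictXAxis : MvPolynomial (Fin 2) R →ₐ[R] R[X] := aeval ![Polynomial.X, 0]

@[simp] theorem restrictXAxis_X_zero :
    restrictXAxis (X 0 : MvPolynomial (Fin 2) R) = Polynomial.X :=
  aeval_X _ _

@[simp] theorem restrictXAxis_X_one : restrictXAxis (X 1 : MvPolynomial (Fin 2) R) = 0 :=
  aeval_X _ _

theorem restrictXAxis_pderiv_zero (g : MvPolynomial (Fin 2) R) :
    restrictXAxis (pderiv 0 g) = derivative (restrictXAxis g) := by
  induction g using MvPolynomial.induction_on with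
  | C a => simp [restrictXAxis]
  | add f g hf hg => simp only [map_add, hf, hg]
  | mul_X f j hf => fin_cases j <;> simp [derivative_mul, hf]; ring

theorem map_restrictXAxis {S : Type*} [CommRing S] (φ : R →+* S) (g : MvPolynomial (Fin 2) R) :
    (restrictXAxis g).map φ = restrictXAxis (MvPolynomial.map φ g) := by
  induction g using MvPolynomial.induction_on with
  | C a => simp [restrictXAxis]
  | add f g hf hg => simp only [map_add, Polynomial.map_add, hf, hg]
  | mul_X f j hf => fin_cases j <;> simp [hf]

theorem coeff_restrictXAxis (g : MvPolynomial (Fin 2) R) (d : ℕ) :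
    (restrictXAxis g).coeff d = g.coeff (Finsupp.single 0 d) := by
  induction g using MvPolynomial.induction_on' with
  | monomial m a =>
    have hm : restrictXAxis (monomial m a) = Polynomial.C a * Polynomial.X ^ m 0 * 0 ^ m 1 := by
      simp [restrictXAxis, MvPolynomial.aeval_monomial, Finsupp.prod_fintype, Fin.prod_univ_two,
        mul_assoc]
    rw [MvPolynomial.coeff_monomial, hm]
    by_cases h1 : m 1 = 0
    · have : m = Finsupp.single 0 d ↔ d = m 0 :=
        ⟨fun h => by simp [h], fun h => by ext i; fin_cases i <;> simp [h, h1]⟩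
      simp [h1, Polynomial.coeff_X_pow, this]
    · have : m ≠ Finsupp.single 0 d := fun h => h1 (by simp [h])
      simp [h1, this]
  | add f g hf hg => simp [hf, hg]

theorem evalP_eq_eval_restrictXAxis (g : MvPolynomial (Fin 2) ℂ) (x : ℂ) :
    evalP g (x, 0) = (restrictXAxis g).eval x := by
  rw [restrictXAxis, ← Polynomial.coe_aeval_eq_eval, ← AlgHom.comp_apply, comp_aeval, evalP,
    ← MvPolynomial.coe_aeval_eq_eval]
  change MvPolynomial.aeval _ g = MvPolynomial.aeval _ g
  congr 2 with i
  fin_cases i <;> simp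

def flexJet (a b c : R[X]) : R[X] :=
  derivative (derivative a) * b ^ 2 - 2 * derivative b * derivative a * b + c * derivative a ^ 2

theorem restrictXAxis_flexPoly (f : MvPolynomial (Fin 2) R) :
    restrictXAxis (flexPoly f) = flexJet (restrictXAxis f) (restrictXAxis (pderiv 1 f))
      (restrictXAxis (pderiv 1 (pderiv 1 f))) := by
  simp [flexPoly, flexJet, restrictXAxis_pderiv_zero, map_ofNat]

theorem map_flexPoly {S : Type*} [CommRing S] (φ : R →+* S) (f : MvPolynomial (Fin 2) R) :
    MvPolynomial.map φ (flexPoly f) = flexPoly (MvPolynomial.map φ f) := by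
  simp [flexPoly, pderiv_map]

end RestrictXAxis

namespace Polynomial

theorem resultant_eq_zero_of_isRoot {R : Type*} [CommRing R] {f g : R[X]} {m n : ℕ} {x : R}
    (hf : f.natDegree ≤ m) (hg : g.natDegree ≤ n) (hmn : m ≠ 0 ∨ n ≠ 0) (hfx : f.IsRoot x)
    (hgx : g.IsRoot x) : resultant f g m n = 0 := by
  obtain ⟨p, q, -, -, h⟩ := exists_mul_add_mul_eq_C_resultant f g hf hg hmn
  simpa [hfx.eq_zero, hgx.eq_zero] using congr_arg (eval x) h.symm

theorem resultant_ne_zero_of_isCoprime {R : Type*} [CommRing R] [IsDomain R] {f g : R[X]} {n : ℕ}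
    (hf : f ≠ 0) (hg : g.natDegree ≤ n) (h : IsCoprime f g) : resultant f g f.natDegree n ≠ 0 := by
  obtain ⟨k, rfl⟩ := Nat.exists_eq_add_of_le hg
  rw [resultant_add_right_deg _ _ _ _ _ le_rfl, coeff_natDegree]
  exact mul_ne_zero (pow_ne_zero _ (leadingCoeff_ne_zero.2 hf)) (resultant_ne_zero f g h)

theorem isCoprime_of_forall_isRoot {K : Type*} [Field K] [IsAlgClosed K] {p q : K[X]}
    (h : ∀ x, p.IsRoot x → q.eval x ≠ 0) : IsCoprime p q :=
  (isCoprime_iff_aeval_ne_zero_of_isAlgClosed K K p q).2 fun x => by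
    simpa [or_iff_not_imp_left] using h x

end Polynomial

section Generic

def expVec (k : ℤ × ℤ) : Fin 2 →₀ ℕ := Finsupp.single 0 k.1.toNat + Finsupp.single 1 k.2.toNat

@[simp] theorem expVec_apply_zero (k : ℤ × ℤ) : expVec k 0 = k.1.toNat := by simp [expVec]

@[simp] theorem expVec_apply_one (k : ℤ × ℤ) : expVec k 1 = k.2.toNat := by simp [expVec]

theorem expVec_natCast (m : Fin 2 →₀ ℕ) : expVec ((m 0 : ℤ), (m 1 : ℤ)) = m := by
  ext i; fin_cases i <;> simp

theorem coeffAt_eq_coeff_expVec (f : MvPolynomial (Fin 2) ℂ) {k : ℤ × ℤ} (hk : 0 ≤ k.1 ∧ 0 ≤ k.2) :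
    coeffAt f k = f.coeff (expVec k) :=
  if_pos hk

def genericPoly (S : Set (ℤ × ℤ)) [Fintype S] : MvPolynomial (Fin 2) (MvPolynomial S ℂ) :=
  ∑ k : S, monomial (expVec k) (X k)

theorem map_eval_genericPoly {S : Set (ℤ × ℤ)} [Fintype S] (hS : ∀ k ∈ S, 0 ≤ k.1 ∧ 0 ≤ k.2)
    {f : MvPolynomial (Fin 2) ℂ} (hf : SuppIn f S) :
    MvPolynomial.map (eval fun k : S => coeffAt f k) (genericPoly S) = f := by
  have hinj : Function.Injective fun k : S => expVec k := by
    intro k l h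
    have h0 := congr($h 0)
    have h1 := congr($h 1)
    obtain ⟨hk₁, hk₂⟩ := hS k k.2
    obtain ⟨hl₁, hl₂⟩ := hS l l.2
    simp only [expVec_apply_zero, expVec_apply_one] at h0 h1
    ext <;> omega
  calc MvPolynomial.map (eval fun k : S => coeffAt f k) (genericPoly S)
      = ∑ k : S, monomial (expVec k) (f.coeff (expVec k)) := by
        simp [genericPoly, coeffAt_eq_coeff_expVec f (hS _ (Subtype.prop _))]
    _ = ∑ m ∈ Finset.univ.image fun k : S => expVec k, monomial m (f.coeff m) :=
        (Finset.sum_image (f := fun m => monomial m (f.coeff m)) fun k _ l _ h => hinj h).symm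
    _ = ∑ m ∈ f.support, monomial m (f.coeff m) := by
        refine (Finset.sum_subset (fun m hm => ?_) fun m _ hm => ?_).symm
        · exact Finset.mem_image.2 ⟨⟨_, hf m hm⟩, Finset.mem_univ _, expVec_natCast m⟩
        · simp [MvPolynomial.notMem_support_iff.1 hm]
    _ = f := support_sum_monomial_coeff f

/-- When `x ^ s` divides `f(x, 0)`, the roots of `bottomPoly s f` include those of `f(x, 0)` in
`ℂ ∖ {0}`. -/
def bottomPoly {R : Type*} [CommRing R] (s : ℕ) (f : MvPolynomial (Fin 2) R) : R[X] :=
  restrictXAxis f /ₘ Polynomial.X ^ s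

theorem map_bottomPoly {R S : Type*} [CommRing R] [CommRing S] (φ : R →+* S) (s : ℕ)
    (f : MvPolynomial (Fin 2) R) :
    (bottomPoly s f).map φ = bottomPoly s (MvPolynomial.map φ f) := by
  rw [bottomPoly, map_divByMonic φ (monic_X_pow s), map_restrictXAxis, Polynomial.map_pow,
    Polynomial.map_X, bottomPoly]

theorem bottomPoly_eq_of_restrictXAxis_eq {R : Type*} [CommRing R] {s : ℕ}
    {f : MvPolynomial (Fin 2) R} {U : R[X]} (h : restrictXAxis f = Polynomial.X ^ s * U) :
    bottomPoly s f = U := by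
  rw [bottomPoly, h, mul_divByMonic_cancel_left _ (monic_X_pow s)]

section BottomRow

variable {S : Set (ℤ × ℤ)} {f : MvPolynomial (Fin 2) ℂ}

theorem mem_of_coeff_restrictXAxis_ne_zero (hf : SuppIn f S) {d : ℕ}
    (h : (restrictXAxis f).coeff d ≠ 0) : ((d : ℤ), 0) ∈ S := by
  rw [coeff_restrictXAxis] at h
  simpa using hf _ (mem_support_iff.2 h)

theorem X_pow_mul_bottomPoly {s : ℕ} (hrow : ∀ i : ℤ, (i, 0) ∈ S → s ≤ i) (hf : SuppIn f S) :
    Polynomial.X ^ s * bottomPoly s f = restrictXAxis f := by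
  have hdvd : Polynomial.X ^ s ∣ restrictXAxis f := by
    refine X_pow_dvd_iff.2 fun d hd => ?_
    by_contra h
    have := hrow _ (mem_of_coeff_restrictXAxis_ne_zero hf h)
    omega
  have := modByMonic_add_div (restrictXAxis f) (Polynomial.X ^ s)
  rwa [(modByMonic_eq_zero_iff_dvd (monic_X_pow s)).2 hdvd, zero_add] at this

theorem natDegree_bottomPoly_le {s n : ℕ} (hrow : ∀ i : ℤ, (i, 0) ∈ S → i ≤ s + n)
    (hf : SuppIn f S) : (bottomPoly s f).natDegree ≤ n := by
  have : (restrictXAxis f).natDegree ≤ s + n := by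
    refine natDegree_le_iff_coeff_eq_zero.2 fun d hd => ?_
    by_contra h
    have := hrow _ (mem_of_coeff_restrictXAxis_ne_zero hf h)
    omega
  rw [bottomPoly, natDegree_divByMonic _ (monic_X_pow s), natDegree_X_pow]
  omega

end BottomRow

/-- A polynomial in `ℂ^S` showing that the resultant of `bottomPoly s` and the restriction of the
flex polynomial to `y = 0` does not vanish identically on `ℂ^S`. -/
def IsFlexWitness (S : Set (ℤ × ℤ)) (s n : ℕ) (f : MvPolynomial (Fin 2) ℂ) : Prop :=
  SuppIn f S ∧ ∃ U : ℂ[X], restrictXAxis f = Polynomial.X ^ s * U ∧ U.degree = n ∧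
    ∀ x, U.IsRoot x → (restrictXAxis (flexPoly f)).eval x ≠ 0

theorem genericOn_interMult_le_two {S : Set (ℤ × ℤ)} [Fintype S]
    (hS : ∀ k ∈ S, 0 ≤ k.1 ∧ 0 ≤ k.2) {s n : ℕ} (hrow : ∀ i : ℤ, (i, 0) ∈ S → s ≤ i ∧ i ≤ s + n)
    {f₀ : MvPolynomial (Fin 2) ℂ} (hf₀ : IsFlexWitness S s n f₀) :
    GenericOn S (fun f => ∀ x₀ : ℂ, x₀ ≠ 0 → evalP f (x₀, 0) = 0 →
      ∀ w : ℂ × ℂ, w ≠ 0 → interMult f (x₀, 0) w ≤ 2) := by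
  set F := genericPoly S
  -- the `+ 1` keeps the Sylvester matrix nonempty when `n = 0`
  set N := (restrictXAxis (flexPoly F)).natDegree + 1
  have heval : ∀ f, SuppIn f S → eval (fun k : S => coeffAt f k)
      (resultant (bottomPoly s F) (restrictXAxis (flexPoly F)) n N)
        = resultant (bottomPoly s f) (restrictXAxis (flexPoly f)) n N := fun f hf => by
    rw [← resultant_map_map, map_bottomPoly, map_restrictXAxis, map_flexPoly,
      map_eval_genericPoly hS hf]
  have hdeg : ∀ f, SuppIn f S → (restrictXAxis (flexPoly f)).natDegree ≤ N := fun f hf => by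
    rw [← map_eval_genericPoly hS hf, ← map_flexPoly, ← map_restrictXAxis]
    exact natDegree_map_le.trans (Nat.le_succ _)
  refine ⟨resultant (bottomPoly s F) (restrictXAxis (flexPoly F)) n N, fun h0 => ?_,
    fun f hf hD x₀ hx₀ hfx w hw => ?_⟩
  · obtain ⟨hf₀S, U, hU, hUdeg, hroot⟩ := hf₀
    have := heval f₀ hf₀S
    rw [h0, map_zero, bottomPoly_eq_of_restrictXAxis_eq hU,
      ← natDegree_eq_of_degree_eq_some hUdeg] at this
    exact resultant_ne_zero_of_isCoprime (ne_zero_of_degree_gt (n := ⊥) (by simp [hUdeg]))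
      (hdeg f₀ hf₀S) (isCoprime_of_forall_isRoot hroot) this.symm
  · by_contra! h
    have hbot : (bottomPoly s f).IsRoot x₀ := by
      rw [evalP_eq_eval_restrictXAxis, ← X_pow_mul_bottomPoly (fun i hi => (hrow i hi).1) hf,
        Polynomial.eval_mul, Polynomial.eval_pow, Polynomial.eval_X] at hfx
      exact (mul_eq_zero.1 hfx).resolve_left (pow_ne_zero _ hx₀)
    have hflex : (restrictXAxis (flexPoly f)).IsRoot x₀ := by
      rw [IsRoot, ← evalP_eq_eval_restrictXAxis]
      exact evalP_flexPoly_eq_zero_of_two_lt_interMult hw h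
    exact hD ((heval f hf).trans (resultant_eq_zero_of_isRoot
      (natDegree_bottomPoly_le (fun i hi => (hrow i hi).2) hf) (hdeg f hf)
      (Or.inr (Nat.succ_ne_zero _)) hbot hflex))

end Generic

section FlexJet

variable {R : Type*} [CommRing R]

theorem eval_mul_derivative_X_pow (k : ℕ) (x : R) :
    x * (derivative (Polynomial.X ^ k : R[X])).eval x = k * x ^ k := by
  cases k with
  | zero => simp
  | succ k => simp; ring

theorem eval_sq_mul_derivative_derivative_X_pow (k : ℕ) (x : R) :
    x ^ 2 * (derivative (derivative (Polynomial.X ^ k : R[X]))).eval x = k * (k - 1) * x ^ k := by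
  rcases k with _ | _ | k
  · simp
  · simp
  · simp; ring

variable {U : R[X]} {x : R}

theorem eval_derivative_X_pow_mul_of_isRoot (s : ℕ) (hx : U.IsRoot x) :
    (derivative (Polynomial.X ^ s * U)).eval x = x ^ s * (derivative U).eval x := by
  simp [derivative_mul, hx.eq_zero]

theorem eval_mul_derivative_derivative_X_pow_mul_of_isRoot (s : ℕ) (hx : U.IsRoot x) :
    x * (derivative (derivative (Polynomial.X ^ s * U))).eval x
      = x ^ s * (2 * s * (derivative U).eval x + x * (derivative (derivative U)).eval x) := by
  have h := eval_mul_derivative_X_pow (R := R) s x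
  simp only [derivative_mul, derivative_add, Polynomial.eval_add, Polynomial.eval_mul,
    hx.eq_zero, mul_zero, zero_add, Polynomial.eval_pow, Polynomial.eval_X]
  linear_combination 2 * (derivative U).eval x * h

theorem eval_flexJet_X_pow_mul_zero_of_isRoot (s r : ℕ) (hx : U.IsRoot x) :
    (flexJet (Polynomial.X ^ s * U) 0 (2 * Polynomial.X ^ r)).eval x
      = 2 * x ^ r * (x ^ s * (derivative U).eval x) ^ 2 := by
  simp only [flexJet, Polynomial.eval_add, Polynomial.eval_sub, Polynomial.eval_mul,
    Polynomial.eval_pow, Polynomial.eval_X, Polynomial.eval_ofNat, Polynomial.eval_zero,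
    derivative_zero, eval_derivative_X_pow_mul_of_isRoot s hx]
  ring

theorem sq_mul_eval_flexJet_X_pow_mul_X_pow_of_isRoot (s q : ℕ) (hx : U.IsRoot x) :
    x ^ 2 * (flexJet (Polynomial.X ^ s * U) (Polynomial.X ^ q) 0).eval x
      = x ^ (s + 2 * q) * (x ^ 2 * (derivative (derivative U)).eval x
          + (2 * s - 2 * q) * (x * (derivative U).eval x)) := by
  have h₁ := eval_mul_derivative_derivative_X_pow_mul_of_isRoot s hx
  have h₂ := eval_mul_derivative_X_pow (R := R) q x
  simp only [flexJet, Polynomial.eval_add, Polynomial.eval_sub, Polynomial.eval_mul,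
    Polynomial.eval_pow, Polynomial.eval_X, Polynomial.eval_ofNat, Polynomial.eval_zero,
    eval_derivative_X_pow_mul_of_isRoot s hx]
  linear_combination x ^ (2 * q + 1) * h₁ - 2 * x ^ (q + 1) * x ^ s * (derivative U).eval x * h₂

end FlexJet

theorem eval_derivatives_X_pow_sub_one_of_isRoot {n : ℕ} (hn : 0 < n) {x : ℂ}
    (hx : (Polynomial.X ^ n - 1 : ℂ[X]).IsRoot x) :
    x ≠ 0 ∧ x * (derivative (Polynomial.X ^ n - 1 : ℂ[X])).eval x = n ∧
      x ^ 2 * (derivative (derivative (Polynomial.X ^ n - 1 : ℂ[X]))).eval x = n * (n - 1) := by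
  have hxn : x ^ n = 1 := by simpa [sub_eq_zero] using hx
  refine ⟨by rintro rfl; simp [hn.ne'] at hxn, ?_, ?_⟩
  · simpa [hxn] using eval_mul_derivative_X_pow n x
  · simpa [hxn] using eval_sq_mul_derivative_derivative_X_pow n x

section SuppIn

variable {S : Set (ℤ × ℤ)} {f g : MvPolynomial (Fin 2) ℂ}

theorem SuppIn.add (hf : SuppIn f S) (hg : SuppIn g S) : SuppIn (f + g) S := fun m hm =>
  (Finset.mem_union.1 (support_add hm)).elim (hf m) (hg m)

theorem SuppIn.sub (hf : SuppIn f S) (hg : SuppIn g S) : SuppIn (f - g) S := fun m hm =>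
  (Finset.mem_union.1 (support_sub _ f g hm)).elim (hf m) (hg m)

theorem suppIn_X_pow_mul_X_pow {a b : ℕ} (h : ((a : ℤ), (b : ℤ)) ∈ S) :
    SuppIn (X 0 ^ a * X 1 ^ b) S := by
  intro m hm
  rw [MvPolynomial.X_pow_eq_monomial, MvPolynomial.X_pow_eq_monomial, monomial_mul, one_mul,
    MvPolynomial.support_monomial,
    if_neg one_ne_zero, Finset.mem_singleton] at hm
  simpa [hm] using h

theorem suppIn_X_pow {a : ℕ} (h : ((a : ℤ), 0) ∈ S) : SuppIn (X 0 ^ a) S := by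
  simpa using suppIn_X_pow_mul_X_pow (b := 0) (by simpa using h)

end SuppIn

section Witnesses

variable {S : Set (ℤ × ℤ)} {s n : ℕ} {g : MvPolynomial (Fin 2) ℂ} {U : ℂ[X]}

theorem isFlexWitness_X_pow (hs : ((s : ℤ), 0) ∈ S) : IsFlexWitness S s 0 (X 0 ^ s) :=
  ⟨suppIn_X_pow hs, 1, by simp, by simp, by simp⟩

theorem isFlexWitness_add_row_two (hg : SuppIn g S) (hgU : restrictXAxis g = Polynomial.X ^ s * U)
    (hg₁ : pderiv 1 g = 0) (hU : U.degree = n) {r : ℕ} (hr : ((r : ℤ), 2) ∈ S)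
    (hroot : ∀ x, U.IsRoot x → x ≠ 0 ∧ (derivative U).eval x ≠ 0) :
    IsFlexWitness S s n (g + X 0 ^ r * X 1 ^ 2) := by
  refine ⟨hg.add (suppIn_X_pow_mul_X_pow (by simpa using hr)), U, by simp [hgU], hU,
    fun x hx => ?_⟩
  have hflex : restrictXAxis (flexPoly (g + X 0 ^ r * X 1 ^ 2))
      = flexJet (Polynomial.X ^ s * U) 0 (2 * Polynomial.X ^ r) := by
    rw [restrictXAxis_flexPoly]
    congr 1
    · simp [hgU]
    · simp [hg₁]
    · simp [hg₁, map_ofNat, mul_comm]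
  obtain ⟨hx0, hU'⟩ := hroot x hx
  rw [hflex, eval_flexJet_X_pow_mul_zero_of_isRoot s r hx]
  exact mul_ne_zero (mul_ne_zero two_ne_zero (pow_ne_zero _ hx0))
    (pow_ne_zero _ (mul_ne_zero (pow_ne_zero _ hx0) hU'))

theorem isFlexWitness_add_row_one (hg : SuppIn g S) (hgU : restrictXAxis g = Polynomial.X ^ s * U)
    (hg₁ : pderiv 1 g = 0) (hU : U.degree = n) {q : ℕ} (hq : ((q : ℤ), 1) ∈ S)
    (hroot : ∀ x, U.IsRoot x → x ≠ 0 ∧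
      x ^ 2 * (derivative (derivative U)).eval x + (2 * s - 2 * q) * (x * (derivative U).eval x)
        ≠ 0) :
    IsFlexWitness S s n (g + X 0 ^ q * X 1) := by
  refine ⟨hg.add (by simpa using suppIn_X_pow_mul_X_pow (b := 1) (by simpa using hq)), U,
    by simp [hgU], hU, fun x hx h0 => ?_⟩
  have hflex : restrictXAxis (flexPoly (g + X 0 ^ q * X 1))
      = flexJet (Polynomial.X ^ s * U) (Polynomial.X ^ q) 0 := by
    rw [restrictXAxis_flexPoly]
    congr 1
    · simp [hgU]
    · simp [hg₁]
    · simp [hg₁]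
  obtain ⟨hx0, hU⟩ := hroot x hx
  have := sq_mul_eval_flexJet_X_pow_mul_X_pow_of_isRoot s q hx
  rw [← hflex, h0, mul_zero, eq_comm, mul_eq_zero] at this
  exact this.elim (pow_ne_zero _ hx0) hU

variable (hrow : ∀ i : ℤ, (i, 0) ∈ S ↔ s ≤ i ∧ i ≤ s + n)
include hrow

theorem suppIn_X_pow_of_le {a : ℕ} (h₁ : s ≤ a) (h₂ : a ≤ s + n) :
    SuppIn (X 0 ^ a : MvPolynomial (Fin 2) ℂ) S :=
  suppIn_X_pow ((hrow a).2 (by omega))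

theorem suppIn_X_pow_add_sub_X_pow : SuppIn (X 0 ^ (s + n) - X 0 ^ s : MvPolynomial (Fin 2) ℂ) S :=
  (suppIn_X_pow_of_le hrow (by omega) le_rfl).sub (suppIn_X_pow_of_le hrow le_rfl (by omega))

theorem isFlexWitness_of_row_two (hn : 0 < n) {r : ℕ} (hr : ((r : ℤ), 2) ∈ S) :
    IsFlexWitness S s n
      (X 0 ^ (s + n) - X 0 ^ s + X 0 ^ r * X 1 ^ 2 : MvPolynomial (Fin 2) ℂ) := by
  refine isFlexWitness_add_row_two (U := Polynomial.X ^ n - 1) (suppIn_X_pow_add_sub_X_pow hrow)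
    (by simp; ring) (by simp) (by simpa using degree_X_pow_sub_C hn (1 : ℂ)) hr fun x hx => ?_
  obtain ⟨hx0, hU', -⟩ := eval_derivatives_X_pow_sub_one_of_isRoot hn hx
  refine ⟨hx0, fun h => ?_⟩
  rw [h, mul_zero, eq_comm, Nat.cast_eq_zero] at hU'
  omega

theorem isFlexWitness_of_row_one_of_ne (hn : 0 < n) {q : ℕ} (hq : ((q : ℤ), 1) ∈ S)
    (hq' : 2 * (q : ℤ) ≠ 2 * s + n - 1) :
    IsFlexWitness S s n (X 0 ^ (s + n) - X 0 ^ s + X 0 ^ q * X 1 : MvPolynomial (Fin 2) ℂ) := by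
  refine isFlexWitness_add_row_one (U := Polynomial.X ^ n - 1) (suppIn_X_pow_add_sub_X_pow hrow)
    (by simp; ring) (by simp) (by simpa using degree_X_pow_sub_C hn (1 : ℂ)) hq fun x hx => ?_
  obtain ⟨hx0, hU', hU''⟩ := eval_derivatives_X_pow_sub_one_of_isRoot hn hx
  have hq'' : (n : ℂ) - 1 + 2 * s - 2 * q ≠ 0 := fun h => hq' (by
    exact_mod_cast (by linear_combination -h : (2 * q : ℂ) = 2 * s + n - 1))
  refine ⟨hx0, ?_⟩
  rw [hU', hU'', show (n : ℂ) * (n - 1) + (2 * s - 2 * q) * n = n * (n - 1 + 2 * s - 2 * q) by ring]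
  exact mul_ne_zero (Nat.cast_ne_zero.2 hn.ne') hq''

theorem isFlexWitness_of_row_one_of_eq (hn : 2 ≤ n) {q : ℕ} (hq : ((q : ℤ), 1) ∈ S)
    (hq' : 2 * (q : ℤ) = 2 * s + n - 1) :
    IsFlexWitness S s n
      (X 0 ^ (s + n) + X 0 ^ (s + 1) + X 0 ^ s + X 0 ^ q * X 1 : MvPolynomial (Fin 2) ℂ) := by
  have hsupp : SuppIn (X 0 ^ (s + n) + X 0 ^ (s + 1) + X 0 ^ s : MvPolynomial (Fin 2) ℂ) S :=
    ((suppIn_X_pow_of_le hrow (by omega) le_rfl).add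
      (suppIn_X_pow_of_le hrow (by omega) (by omega))).add
      (suppIn_X_pow_of_le hrow le_rfl (by omega))
  have hdeg : (Polynomial.X ^ n + Polynomial.X + 1 : ℂ[X]).degree = n := by
    compute_degree!
    · simp [show 1 ≠ n by omega, show n ≠ 0 by omega]
    · exact max_eq_left (WithBot.coe_le_coe.2 (by omega))
  refine isFlexWitness_add_row_one hsupp (by simp; ring) (by simp) hdeg hq fun x hx => ?_
  have hxn : x ^ n = -x - 1 := by linear_combination (by simpa using hx : x ^ n + x + 1 = 0)
  have hx0 : x ≠ 0 := by rintro rfl; simp [show n ≠ 0 by omega] at hxn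
  have h₁ := eval_mul_derivative_X_pow n x
  have h₂ := eval_sq_mul_derivative_derivative_X_pow n x
  have hq'' : (2 * q : ℂ) = 2 * s + n - 1 := by exact_mod_cast hq'
  refine ⟨hx0, fun h => ?_⟩
  simp only [derivative_add, derivative_X, derivative_one, Polynomial.eval_add,
    Polynomial.eval_one, add_zero, mul_add, mul_one] at h
  have h₃ : (1 - n : ℂ) * x = 0 := by
    linear_combination h - h₂ - (2 * s - 2 * q : ℂ) * h₁ + (n * x ^ n + x) * hq''
  rcases mul_eq_zero.1 h₃ with h₄ | h₄
  · have : (n : ℂ) = 1 := by linear_combination -h₄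
    norm_cast at this
    omega
  · exact hx0 h₄

end Witnesses

section Geometry

variable {P : Set (ℝ × ℝ)}

theorem IsLatticePolygon.convex (hP : IsLatticePolygon P) : Convex ℝ P := by
  obtain ⟨V, -, rfl⟩ := hP
  exact convex_convexHull ℝ _

theorem isometry_rpt : Isometry rpt :=
  (Isometry.of_dist_eq Int.dist_cast_real).prodMap (Isometry.of_dist_eq Int.dist_cast_real)

theorem IsLatticePolygon.finite_latticePts (hP : IsLatticePolygon P) : (latticePts P).Finite := by
  obtain ⟨V, -, rfl⟩ := hP
  have hb : Bornology.IsBounded (latticePts (convexHull ℝ (rpt '' (V : Set (ℤ × ℤ))))) :=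
    isometry_rpt.antilipschitz.isBounded_preimage
      ((V.finite_toSet.image rpt).isCompact_convexHull ℝ).isBounded
  exact (Metric.isCompact_of_isClosed_isBounded (isClosed_discrete _) hb).finite_of_discrete

theorem IsLatticePolygon.exists_latticePt_snd_le (hP : IsLatticePolygon P) {p : ℝ × ℝ}
    (hp : p ∈ P) : ∃ k ∈ latticePts P, (k.2 : ℝ) ≤ p.2 := by
  obtain ⟨V, -, rfl⟩ := hP
  by_contra! h
  have hsub : convexHull ℝ (rpt '' (V : Set (ℤ × ℤ))) ⊆ {q | p.2 < q.2} :=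
    convexHull_min (by rintro _ ⟨k, hk, rfl⟩; exact h k (subset_convexHull ℝ _ ⟨k, hk, rfl⟩))
      (convex_halfSpace_gt (LinearMap.snd ℝ ℝ ℝ).isLinear _)
  exact lt_irrefl p.2 (hsub hp)

theorem IsLatticePolygon.exists_latticePt_le_snd (hP : IsLatticePolygon P) {p : ℝ × ℝ}
    (hp : p ∈ P) : ∃ k ∈ latticePts P, p.2 ≤ k.2 := by
  obtain ⟨V, -, rfl⟩ := hP
  by_contra! h
  have hsub : convexHull ℝ (rpt '' (V : Set (ℤ × ℤ))) ⊆ {q | q.2 < p.2} :=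
    convexHull_min (by rintro _ ⟨k, hk, rfl⟩; exact h k (subset_convexHull ℝ _ ⟨k, hk, rfl⟩))
      (convex_halfSpace_lt (LinearMap.snd ℝ ℝ ℝ).isLinear _)
  exact lt_irrefl p.2 (hsub hp)

theorem nonneg_of_mem_latticePts (hpos : P ⊆ {p : ℝ × ℝ | 0 ≤ p.1 ∧ 0 ≤ p.2}) {k : ℤ × ℤ}
    (hk : k ∈ latticePts P) : 0 ≤ k.1 ∧ 0 ≤ k.2 := by
  obtain ⟨h₁, h₂⟩ : (0 : ℝ) ≤ k.1 ∧ (0 : ℝ) ≤ k.2 := hpos hk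
  exact ⟨by exact_mod_cast h₁, by exact_mod_cast h₂⟩

theorem exists_bottomRow_eq_Icc (hP : IsLatticePolygon P)
    (hpos : P ⊆ {p : ℝ × ℝ | 0 ≤ p.1 ∧ 0 ≤ p.2}) (hymin : ∃ p ∈ P, p.2 = 0) :
    ∃ s n : ℕ, ∀ i : ℤ, (i, 0) ∈ latticePts P ↔ s ≤ i ∧ i ≤ s + n := by
  set B := {i : ℤ | (i, 0) ∈ latticePts P}
  have hBfin : B.Finite :=
    hP.finite_latticePts.preimage fun i _ j _ h => (Prod.mk.inj h).1
  have hBne : B.Nonempty := by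
    obtain ⟨p, hp, hp0⟩ := hymin
    obtain ⟨k, hk, hk2⟩ := hP.exists_latticePt_snd_le hp
    have hk0 : k.2 = 0 := le_antisymm (by rw [hp0] at hk2; exact_mod_cast hk2)
      (nonneg_of_mem_latticePts hpos hk).2
    refine ⟨k.1, ?_⟩
    rwa [Set.mem_ofPred_eq, ← hk0]
  obtain ⟨a, ha, hamin⟩ := B.exists_min_image id hBfin hBne
  obtain ⟨b, hb, hbmax⟩ := B.exists_max_image id hBfin hBne
  obtain ⟨s, rfl⟩ := Int.eq_ofNat_of_zero_le (nonneg_of_mem_latticePts hpos ha).1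
  obtain ⟨n, rfl⟩ : ∃ n : ℕ, b = s + n :=
    ⟨(b - s).toNat, by have := hamin b hb; simp at this; omega⟩
  refine ⟨s, n, fun i => ⟨fun hi => ⟨hamin i hi, hbmax i hi⟩, fun hi => ?_⟩⟩
  have hseg : segment ℝ ((s : ℤ) : ℝ) ((s + n : ℤ) : ℝ) ⊆ (fun x => (x, ((0 : ℤ) : ℝ))) ⁻¹' P := by
    rw [← Set.image_subset_iff, Prod.image_mk_segment_left]
    exact hP.convex.segment_subset ha hb
  refine hseg ?_
  rw [segment_eq_Icc (by exact_mod_cast (by omega : (s : ℤ) ≤ s + n))]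
  exact ⟨by exact_mod_cast hi.1, by exact_mod_cast hi.2⟩

theorem exists_latticePt_one_le_snd (hP : IsLatticePolygon P)
    (hpos : P ⊆ {p : ℝ × ℝ | 0 ≤ p.1 ∧ 0 ≤ p.2}) (h2dim : 0 < areaOf P) :
    ∃ k ∈ latticePts P, 1 ≤ k.2 := by
  obtain ⟨p, hp, hp2⟩ : ∃ p ∈ P, 0 < p.2 := by
    by_contra! h
    have hsub : P ⊆ Set.univ ×ˢ {0} := fun p hp => ⟨trivial, le_antisymm (h p hp) (hpos hp).2⟩
    have hvol : MeasureTheory.volume P = 0 := MeasureTheory.measure_mono_null hsub (by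
      rw [MeasureTheory.Measure.volume_eq_prod, MeasureTheory.Measure.prod_prod,
        Real.volume_singleton, mul_zero])
    simp [areaOf, hvol] at h2dim
  obtain ⟨k, hk, hk2⟩ := hP.exists_latticePt_le_snd hp
  have : (0 : ℝ) < k.2 := hp2.trans_le hk2
  exact ⟨k, hk, by exact_mod_cast this⟩

theorem exists_mem_latticePts_snd_eq_one (hP : Convex ℝ P) {i t h : ℤ} (hA : (i, 0) ∈ latticePts P)
    (hB : (i + 1, 0) ∈ latticePts P) (hC : (t, h) ∈ latticePts P) (hh : 1 ≤ h) :
    ∃ j : ℤ, (j, 1) ∈ latticePts P := by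
  -- `e = ⌈(t - i) / h⌉`: the row `y = 1` of the triangle `(i, 0), (i + 1, 0), (t, h)` is the
  -- segment from `i + (t - i) / h` of length `1 - 1 / h`, so it contains `i + e`.
  obtain ⟨e, he₁, he₂⟩ : ∃ e : ℤ, t - i ≤ h * e ∧ h * e ≤ t - i + h - 1 := by
    have h₁ := Int.emod_add_mul_ediv (t - i + h - 1) h
    have h₂ := Int.emod_nonneg (t - i + h - 1) (by omega : h ≠ 0)
    have h₃ := Int.emod_lt_of_pos (t - i + h - 1) (by omega : 0 < h)
    exact ⟨(t - i + h - 1) / h, by linarith, by linarith⟩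
  refine ⟨i + e, ?_⟩
  have hh' : (0 : ℝ) < h := by exact_mod_cast (by omega : 0 < h)
  have he₁' : ((t : ℝ) - i) ≤ h * e := by exact_mod_cast he₁
  have he₂' : (h : ℝ) * e ≤ t - i + h - 1 := by exact_mod_cast he₂
  have hmem := hP.sum_mem (t := Finset.univ)
    (w := ![((t : ℝ) - i + h - 1 - h * e) / h, ((h : ℝ) * e - (t - i)) / h, 1 / (h : ℝ)])
    (z := ![rpt (i, 0), rpt (i + 1, 0), rpt (t, h)])
    (by intro j _; fin_cases j <;> simp <;> first | omega | (apply div_nonneg <;> linarith))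
    (by simp [Fin.sum_univ_three]; field_simp; ring)
    (by intro j _; fin_cases j <;> assumption)
  show rpt (i + e, 1) ∈ P
  convert hmem using 1
  simp only [Fin.sum_univ_three, rpt, Prod.ext_iff]
  simp
  constructor
  · field_simp
    ring
  · field_simp

end Geometry

theorem lowRows_eq_thinTriangle {S : Set (ℤ × ℤ)} {s : ℕ}
    (hrow : ∀ i : ℤ, (i, 0) ∈ S ↔ s ≤ i ∧ i ≤ s + 1) (h₂ : ¬∃ r : ℤ, (r, 2) ∈ S)
    (h₁ : ∀ q : ℤ, (q, 1) ∈ S → q = s) (hs : ((s : ℤ), 1) ∈ S) :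
    {k : ℤ × ℤ | k ∈ S ∧ 0 ≤ k.2 ∧ k.2 ≤ 2} = {((s : ℤ), 0), ((s : ℤ) + 1, 0), ((s : ℤ), 1)} := by
  ext ⟨a, b⟩
  simp only [Set.mem_ofPred_eq, Set.mem_insert_iff, Set.mem_singleton_iff, Prod.mk.injEq]
  constructor
  · rintro ⟨hk, hb₀, hb₂⟩
    obtain rfl | rfl | rfl : b = 0 ∨ b = 1 ∨ b = 2 := by omega
    · have := (hrow a).1 hk
      omega
    · exact Or.inr (Or.inr ⟨h₁ a hk, rfl⟩)
    · exact absurd ⟨a, hk⟩ h₂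
  · rintro (⟨rfl, rfl⟩ | ⟨rfl, rfl⟩ | ⟨rfl, rfl⟩)
    · exact ⟨(hrow _).2 (by omega), le_rfl, by norm_num⟩
    · exact ⟨(hrow _).2 (by omega), le_rfl, by norm_num⟩
    · exact ⟨hs, by norm_num, by norm_num⟩

theorem exists_isFlexWitness {P : Set (ℝ × ℝ)} (hP : IsLatticePolygon P)
    (hpos : P ⊆ {p : ℝ × ℝ | 0 ≤ p.1 ∧ 0 ≤ p.2}) (h2dim : 0 < areaOf P)
    (hthin : ¬∃ s : ℤ, {k : ℤ × ℤ | rpt k ∈ P ∧ 0 ≤ k.2 ∧ k.2 ≤ 2}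
        = {(s, 0), (s + 1, 0), (s, 1)})
    {s n : ℕ} (hrow : ∀ i : ℤ, (i, 0) ∈ latticePts P ↔ s ≤ i ∧ i ≤ s + n) :
    ∃ f, IsFlexWitness (latticePts P) s n f := by
  have hnn : ∀ k ∈ latticePts P, 0 ≤ k.1 := fun k hk => (nonneg_of_mem_latticePts hpos hk).1
  rcases Nat.eq_zero_or_pos n with rfl | hn
  · exact ⟨_, isFlexWitness_X_pow ((hrow s).2 (by simp))⟩
  by_cases h₂ : ∃ r : ℤ, (r, 2) ∈ latticePts P
  · obtain ⟨r, hr⟩ := h₂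
    lift r to ℕ using hnn _ hr
    exact ⟨_, isFlexWitness_of_row_two hrow hn hr⟩
  by_cases h₁ : ∃ q : ℤ, (q, 1) ∈ latticePts P ∧ 2 * q ≠ 2 * s + n - 1
  · obtain ⟨q, hq, hq'⟩ := h₁
    lift q to ℕ using hnn _ hq
    exact ⟨_, isFlexWitness_of_row_one_of_ne hrow hn hq hq'⟩
  push Not at h₁
  obtain ⟨q, hq⟩ : ∃ q : ℤ, (q, 1) ∈ latticePts P := by
    obtain ⟨⟨t, h⟩, hk, hk₁⟩ := exists_latticePt_one_le_snd hP hpos h2dim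
    exact exists_mem_latticePts_snd_eq_one hP.convex ((hrow s).2 (by omega)) ((hrow (s + 1)).2 (by omega)) hk hk₁
  lift q to ℕ using hnn _ hq
  rcases (show n = 1 ∨ 2 ≤ n by omega) with rfl | hn₂
  · have hqs : (q : ℤ) = s := by have := h₁ q hq; omega
    refine absurd ⟨s, lowRows_eq_thinTriangle hrow h₂ (fun q' hq' => ?_) (hqs ▸ hq)⟩ hthin
    have := h₁ q' hq'
    omega
  · exact ⟨_, isFlexWitness_of_row_one_of_eq hrow hn₂ hq (h₁ q hq)⟩

theorem no_inflection_at_infinity (P : Set (ℝ × ℝ)) (hP : IsLatticePolygon P)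
    (hpos : P ⊆ {p : ℝ × ℝ | 0 ≤ p.1 ∧ 0 ≤ p.2})
    (h2dim : 0 < areaOf P)
    (hymin : ∃ p ∈ P, p.2 = 0)
    (hthin : ¬∃ s : ℤ, {k : ℤ × ℤ | rpt k ∈ P ∧ 0 ≤ k.2 ∧ k.2 ≤ 2}
        = {(s, 0), (s + 1, 0), (s, 1)}) :
    GenericOn (latticePts P) (fun f =>
      ∀ x₀ : ℂ, x₀ ≠ 0 → evalP f (x₀, 0) = 0 →
        ∀ w : ℂ × ℂ, w ≠ 0 → interMult f (x₀, 0) w ≤ 2) := by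
  have := hP.finite_latticePts.fintype
  obtain ⟨s, n, hrow⟩ := exists_bottomRow_eq_Icc hP hpos hymin
  obtain ⟨f₀, hf₀⟩ := exists_isFlexWitness hP hpos h2dim hthin hrow
  exact genericOn_interMult_le_two (fun k hk => nonneg_of_mem_latticePts hpos hk)
    (fun i hi => (hrow i).1 hi) hf₀

end
end
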